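/- arXiv:1901.08578 — 3 statements merged into one kernel-verified Lean document; each statement's English description precedes it below -/
import Mathlib

section
/- Let V, V' : ℤ^d → ℝ (d ≥ 3) be finitely supported with ‖G|V|‖_∞ < 1 and ‖G|V'|‖_∞ < 1. Then ⟨V', γ_{V'}⟩ − ⟨V, γ_V⟩ = ⟨(V' − V) γ_V, γ_{V'}⟩, where ⟨u,v⟩ = Σ_{z∈ℤ^d} u(z) v(z). -/
open scoped BigOperators

noncomputable section

/-- Points of the lattice `ℤ^d`. -/
abbrev Zd (d : ℕ) := Fin d → ℤ

/-- One-step transition kernel of simple random walk on `ℤ^d`. -/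
def srwStep (d : ℕ) (x y : Zd d) : ℝ :=
  if (∑ i, |x i - y i|) = 1 then 1 / (2 * (d : ℝ)) else 0

/-- `n`-step transition probabilities of simple random walk on `ℤ^d`. -/
def srwP (d : ℕ) : ℕ → Zd d → Zd d → ℝ
  | 0, x, y => if x = y then 1 else 0
  | n + 1, x, y => ∑' z : Zd d, srwP d n x z * srwStep d z y

/-- Green function of the (continuous-time) simple random walk on `ℤ^d`,
`g(x,y) = E_x[∫_0^∞ 1{X_s = y} ds] = ∑_n p_n(x,y)`. -/
def green (d : ℕ) (x y : Zd d) : ℝ := ∑' n : ℕ, srwP d n x y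

/-- The Green operator `G f (x) = ∑_y g(x,y) f(y)`. -/
def Gop (d : ℕ) (f : Zd d → ℝ) (x : Zd d) : ℝ := ∑' y : Zd d, green d x y * f y

/-- The operator `GV : f ↦ G(V·f)` (composition of `G` with multiplication by `V`). -/
def GVop (d : ℕ) (V f : Zd d → ℝ) : Zd d → ℝ := Gop d fun y => V y * f y

/-- Neumann series representation of `(I - GV)⁻¹` applied to `h`
(valid when the operator norm `‖G|V|‖_∞` is `< 1`). -/
def neumann (d : ℕ) (V h : Zd d → ℝ) (x : Zd d) : ℝ := ∑' n : ℕ, (GVop d V)^[n] h x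

/-- The gaugeFn function `γ_V = (I - GV)⁻¹ 1`. -/
def gaugeFn (d : ℕ) (V : Zd d → ℝ) : Zd d → ℝ := neumann d V fun _ => 1

/-- The condition `‖G|V|‖_∞ < 1`. -/
def greenNormLtOne (d : ℕ) (V : Zd d → ℝ) : Prop :=
  ∃ c : ℝ, c < 1 ∧ ∀ x, Gop d (fun y => |V y|) x ≤ c

/-- The pairing `⟨u,v⟩_{ℤ^d} = ∑_z u(z) v(z)`. -/
def pairZ (d : ℕ) (u v : Zd d → ℝ) : ℝ := ∑' z : Zd d, u z * v z

/-- The discrete Dirichlet form `𝓔_{ℤ^d}(f,g) = (1/(4d)) ∑_{x∼y} (f(y)-f(x))(g(y)-g(x))`. -/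
def dirichletZ (d : ℕ) (f g : Zd d → ℝ) : ℝ :=
  (1 / (4 * (d : ℝ))) * ∑' p : Zd d × Zd d,
    if (∑ i, |p.1 i - p.2 i|) = 1 then (f p.2 - f p.1) * (g p.2 - g p.1) else 0

/-- The sup norm `‖f‖_∞` of a function on `ℤ^d`. -/
def supNorm (d : ℕ) (f : Zd d → ℝ) : ℝ := ⨆ x, |f x|


section GaugeAux

variable {d : ℕ}

lemma srwStep_nonneg (x y : Zd d) : 0 ≤ srwStep d x y := by
  unfold srwStep; split
  · positivity
  · exact le_refl 0

lemma srwP_nonneg (n : ℕ) : ∀ x y : Zd d, 0 ≤ srwP d n x y := by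
  induction n with
  | zero => intro x y; unfold srwP; split <;> norm_num
  | succ n ih =>
    intro x y
    exact tsum_nonneg fun z => mul_nonneg (ih x z) (srwStep_nonneg z y)

lemma green_nonneg (x y : Zd d) : 0 ≤ green d x y :=
  tsum_nonneg fun n => srwP_nonneg n x y

lemma srwStep_add (v x y : Zd d) : srwStep d (x + v) (y + v) = srwStep d x y := by
  unfold srwStep
  have h : ∀ i, (x + v) i - (y + v) i = x i - y i := fun i => by
    simp [add_sub_add_right_eq_sub]
  simp only [h]

lemma srwStep_neg (x y : Zd d) : srwStep d (-x) (-y) = srwStep d x y := by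
  unfold srwStep
  have h : ∀ i, |(-x) i - (-y) i| = |x i - y i| := fun i => by
    simp only [Pi.neg_apply]
    rw [← abs_neg]; ring_nf
  simp only [h]

lemma srwP_add (v : Zd d) (n : ℕ) : ∀ x y, srwP d n (x + v) (y + v) = srwP d n x y := by
  induction n with
  | zero =>
    intro x y
    show (if x + v = y + v then (1:ℝ) else 0) = (if x = y then 1 else 0)
    simp [add_left_inj]
  | succ n ih =>
    intro x y
    show (∑' z : Zd d, srwP d n (x + v) z * srwStep d z (y + v))
        = ∑' z : Zd d, srwP d n x z * srwStep d z y
    rw [← (Equiv.addRight v).tsum_eq (fun z => srwP d n (x + v) z * srwStep d z (y + v))]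
    exact tsum_congr fun z => by
      simp only [Equiv.coe_addRight]
      rw [ih x z, srwStep_add]

lemma srwP_neg (n : ℕ) : ∀ x y : Zd d, srwP d n (-x) (-y) = srwP d n x y := by
  induction n with
  | zero =>
    intro x y
    show (if -x = -y then (1:ℝ) else 0) = (if x = y then 1 else 0)
    simp [neg_inj]
  | succ n ih =>
    intro x y
    show (∑' z : Zd d, srwP d n (-x) z * srwStep d z (-y))
        = ∑' z : Zd d, srwP d n x z * srwStep d z y
    rw [← (Equiv.neg (Zd d)).tsum_eq (fun z => srwP d n (-x) z * srwStep d z (-y))]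
    exact tsum_congr fun z => by
      simp only [Equiv.neg_apply]
      rw [ih x z, srwStep_neg]

lemma srwP_symm (n : ℕ) (x y : Zd d) : srwP d n x y = srwP d n y x := by
  have h1 := srwP_add (x + y) n (-x) (-y)
  have e1 : -x + (x + y) = y := by abel
  have e2 : -y + (x + y) = x := by abel
  rw [e1, e2] at h1
  rw [← srwP_neg n x y, ← h1]

lemma green_symm (x y : Zd d) : green d x y = green d y x :=
  tsum_congr fun n => srwP_symm n x y

lemma Gop_eq_sum (S : Finset (Zd d)) (f : Zd d → ℝ) (hf : ∀ y ∉ S, f y = 0) (x : Zd d) :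
    Gop d f x = ∑ y ∈ S, green d x y * f y :=
  tsum_eq_sum fun y hy => by rw [hf y hy, mul_zero]

lemma iter_bound (V : Zd d → ℝ) (S : Finset (Zd d)) (hS : ∀ y ∉ S, V y = 0)
    (c : ℝ) (hc : ∀ x, Gop d (fun y => |V y|) x ≤ c)
    (h : Zd d → ℝ) (M : ℝ) (hM : ∀ x, |h x| ≤ M) :
    ∀ n x, |(GVop d V)^[n] h x| ≤ c ^ n * M := by
  intro n
  induction n with
  | zero => intro x; simpa using hM x
  | succ n ih =>
    intro x
    rw [Function.iterate_succ_apply']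
    set f := (GVop d V)^[n] h with hf
    have hMn : 0 ≤ c ^ n * M := le_trans (abs_nonneg _) (ih x)
    have hG : GVop d V f x = ∑ y ∈ S, green d x y * (V y * f y) :=
      Gop_eq_sum S _ (fun y hy => by rw [hS y hy, zero_mul]) x
    calc |GVop d V f x| = |∑ y ∈ S, green d x y * (V y * f y)| := by rw [hG]
      _ ≤ ∑ y ∈ S, |green d x y * (V y * f y)| := Finset.abs_sum_le_sum_abs _ _
      _ ≤ ∑ y ∈ S, green d x y * |V y| * (c ^ n * M) := by
          refine Finset.sum_le_sum fun y _ => ?_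
          rw [abs_mul, abs_mul, abs_of_nonneg (green_nonneg x y), mul_assoc]
          exact mul_le_mul_of_nonneg_left
            (mul_le_mul_of_nonneg_left (ih y) (abs_nonneg _)) (green_nonneg x y)
      _ = (∑ y ∈ S, green d x y * |V y|) * (c ^ n * M) := by rw [Finset.sum_mul]
      _ ≤ c * (c ^ n * M) := by
          refine mul_le_mul_of_nonneg_right ?_ hMn
          rw [← Gop_eq_sum S (fun y => |V y|) (fun y hy => by show |V y| = 0; rw [hS y hy, abs_zero]) x]
          exact hc x
      _ = c ^ (n + 1) * M := by ring

lemma summable_iter (V : Zd d → ℝ) (S : Finset (Zd d)) (hS : ∀ y ∉ S, V y = 0)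
    (c : ℝ) (hc0 : 0 ≤ c) (hc1 : c < 1) (hc : ∀ x, Gop d (fun y => |V y|) x ≤ c)
    (h : Zd d → ℝ) (M : ℝ) (hM : ∀ x, |h x| ≤ M) (x : Zd d) :
    Summable fun n => (GVop d V)^[n] h x := by
  have hgeo : Summable fun n : ℕ => c ^ n * M :=
    (summable_geometric_of_lt_one hc0 hc1).mul_right M
  exact summable_abs_iff.mp
    (hgeo.of_nonneg_of_le (fun n => abs_nonneg _) (fun n => iter_bound V S hS c hc h M hM n x))

lemma gauge_rec (V : Zd d → ℝ) (S : Finset (Zd d)) (hS : ∀ y ∉ S, V y = 0)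
    (c : ℝ) (hc0 : 0 ≤ c) (hc1 : c < 1) (hc : ∀ x, Gop d (fun y => |V y|) x ≤ c)
    (x : Zd d) : gaugeFn d V x = 1 + GVop d V (gaugeFn d V) x := by
  have hsum : ∀ y : Zd d, Summable fun n => (GVop d V)^[n] (fun _ => (1:ℝ)) y :=
    summable_iter V S hS c hc0 hc1 hc (fun _ => 1) 1 (fun _ => by norm_num)
  have h0 : gaugeFn d V x
      = 1 + ∑' n : ℕ, (GVop d V)^[n + 1] (fun _ => (1:ℝ)) x := by
    show (∑' n : ℕ, (GVop d V)^[n] (fun _ => (1:ℝ)) x) = _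
    rw [Summable.tsum_eq_zero_add (hsum x)]
    rfl
  have h1 : ∀ n : ℕ, (GVop d V)^[n + 1] (fun _ => (1:ℝ)) x
      = ∑ y ∈ S, green d x y * (V y * (GVop d V)^[n] (fun _ => (1:ℝ)) y) := fun n => by
    rw [Function.iterate_succ_apply']
    exact Gop_eq_sum S _ (fun y hy => by rw [hS y hy, zero_mul]) x
  rw [h0]
  congr 1
  calc (∑' n : ℕ, (GVop d V)^[n + 1] (fun _ => (1:ℝ)) x)
      = ∑' n : ℕ, ∑ y ∈ S, green d x y * (V y * (GVop d V)^[n] (fun _ => (1:ℝ)) y) :=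
        tsum_congr h1
    _ = ∑ y ∈ S, ∑' n : ℕ, green d x y * (V y * (GVop d V)^[n] (fun _ => (1:ℝ)) y) :=
        Summable.tsum_finsetSum fun y _ => ((hsum y).mul_left (V y)).mul_left (green d x y)
    _ = ∑ y ∈ S, green d x y * (V y * gaugeFn d V y) := by
        refine Finset.sum_congr rfl fun y _ => ?_
        rw [tsum_mul_left, tsum_mul_left]
        rfl
    _ = GVop d V (gaugeFn d V) x :=
        (Gop_eq_sum S _ (fun y hy => by rw [hS y hy, zero_mul]) x).symm

lemma sum_G_symm (S : Finset (Zd d)) (u w : Zd d → ℝ)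
    (hu : ∀ x ∉ S, u x = 0) (hw : ∀ x ∉ S, w x = 0) :
    ∑ x ∈ S, u x * Gop d w x = ∑ x ∈ S, Gop d u x * w x := by
  have hGw : ∀ x, Gop d w x = ∑ y ∈ S, green d x y * w y := Gop_eq_sum S w hw
  have hGu : ∀ x, Gop d u x = ∑ y ∈ S, green d x y * u y := Gop_eq_sum S u hu
  simp only [hGw, hGu, Finset.mul_sum, Finset.sum_mul]
  rw [Finset.sum_comm]
  refine Finset.sum_congr rfl fun a _ => Finset.sum_congr rfl fun b _ => ?_
  rw [green_symm b a]; ring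

end GaugeAux

/-- Perturbation formula tested against the potential:
`⟨V', γ_{V'}⟩ − ⟨V, γ_V⟩ = ⟨(V' − V) γ_V, γ_{V'}⟩`. -/
theorem gauge_perturbation_pairing (d : ℕ) (hd : 3 ≤ d) (V V' : Zd d → ℝ)
    (hVfin : (Function.support V).Finite) (hV'fin : (Function.support V').Finite)
    (hV : greenNormLtOne d V) (hV' : greenNormLtOne d V') :
    pairZ d V' (gaugeFn d V') - pairZ d V (gaugeFn d V)
      = pairZ d (fun z => (V' z - V z) * gaugeFn d V z) (gaugeFn d V') := by
  classical
  obtain ⟨c, hc1, hc⟩ := hV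
  obtain ⟨c', hc1', hc'⟩ := hV'
  have hc0 : 0 ≤ c :=
    le_trans (tsum_nonneg fun y => mul_nonneg (green_nonneg _ _) (abs_nonneg _)) (hc (fun _ => 0))
  have hc0' : 0 ≤ c' :=
    le_trans (tsum_nonneg fun y => mul_nonneg (green_nonneg _ _) (abs_nonneg _)) (hc' (fun _ => 0))
  set S : Finset (Zd d) := (hVfin.union hV'fin).toFinset with hSdef
  have hVS : ∀ y ∉ S, V y = 0 := by
    intro y hy
    rw [hSdef, Set.Finite.mem_toFinset] at hy
    simp only [Set.mem_union, Function.mem_support, not_or, not_not] at hy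
    exact hy.1
  have hV'S : ∀ y ∉ S, V' y = 0 := by
    intro y hy
    rw [hSdef, Set.Finite.mem_toFinset] at hy
    simp only [Set.mem_union, Function.mem_support, not_or, not_not] at hy
    exact hy.2
  have recV : ∀ x, gaugeFn d V x = 1 + Gop d (fun y => V y * gaugeFn d V y) x :=
    gauge_rec V S hVS c hc0 hc1 hc
  have recV' : ∀ x, gaugeFn d V' x = 1 + Gop d (fun y => V' y * gaugeFn d V' y) x :=
    gauge_rec V' S hV'S c' hc0' hc1' hc'
  have p1 : pairZ d V' (gaugeFn d V') = ∑ z ∈ S, V' z * gaugeFn d V' z :=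
    tsum_eq_sum fun z hz => by rw [hV'S z hz, zero_mul]
  have p2 : pairZ d V (gaugeFn d V) = ∑ z ∈ S, V z * gaugeFn d V z :=
    tsum_eq_sum fun z hz => by rw [hVS z hz, zero_mul]
  have p3 : pairZ d (fun z => (V' z - V z) * gaugeFn d V z) (gaugeFn d V')
      = ∑ z ∈ S, (V' z - V z) * gaugeFn d V z * gaugeFn d V' z :=
    tsum_eq_sum fun z hz => by
      show (V' z - V z) * gaugeFn d V z * gaugeFn d V' z = 0
      rw [hVS z hz, hV'S z hz]; ring
  rw [p1, p2, p3]
  have key : ∑ x ∈ S, (V' x * gaugeFn d V' x) * Gop d (fun y => V y * gaugeFn d V y) x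
      = ∑ x ∈ S, Gop d (fun y => V' y * gaugeFn d V' y) x * (V x * gaugeFn d V x) :=
    sum_G_symm S _ _ (fun x hx => by rw [hV'S x hx, zero_mul])
      (fun x hx => by rw [hVS x hx, zero_mul])
  have e1 : ∀ x, Gop d (fun y => V y * gaugeFn d V y) x = gaugeFn d V x - 1 := fun x => by
    have := recV x; linarith
  have e2 : ∀ x, Gop d (fun y => V' y * gaugeFn d V' y) x = gaugeFn d V' x - 1 := fun x => by
    have := recV' x; linarith
  simp only [e1, e2] at key
  have hAB : ∑ x ∈ S, (V' x * gaugeFn d V' x) * (gaugeFn d V x - 1)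
      = (∑ x ∈ S, V' x * gaugeFn d V' x * gaugeFn d V x) - ∑ x ∈ S, V' x * gaugeFn d V' x := by
    rw [← Finset.sum_sub_distrib]
    exact Finset.sum_congr rfl fun x _ => by ring
  have hCD : ∑ x ∈ S, (gaugeFn d V' x - 1) * (V x * gaugeFn d V x)
      = (∑ x ∈ S, V x * gaugeFn d V x * gaugeFn d V' x) - ∑ x ∈ S, V x * gaugeFn d V x := by
    rw [← Finset.sum_sub_distrib]
    exact Finset.sum_congr rfl fun x _ => by ring
  have hP3 : ∑ z ∈ S, (V' z - V z) * gaugeFn d V z * gaugeFn d V' z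
      = (∑ x ∈ S, V' x * gaugeFn d V' x * gaugeFn d V x)
        - ∑ x ∈ S, V x * gaugeFn d V x * gaugeFn d V' x := by
    rw [← Finset.sum_sub_distrib]
    exact Finset.sum_congr rfl fun x _ => by ring
  rw [hAB, hCD] at key
  rw [hP3]
  linarith
end
end

section
/- Let d ≥ 3 and let V : ℤ^d → ℝ be finitely supported with ‖G|V|‖_∞ < 1. Then ⟨V, γ_V^2⟩ − ⟨V, γ_V⟩ = 𝓔_{ℤ^d}(γ_V − 1, γ_V − 1), where 𝓔_{ℤ^d}(f,g) = (1/(4d)) Σ_{x∼y} (f(y)−f(x))(g(y)−g(x)) is the discrete Dirichlet form. -/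
open scoped BigOperators

noncomputable section

/-!
Write `P` for the transition operator of the walk and `c = V γ_V`, which is finitely supported.
The Neumann series gives `γ_V - 1 = G c`, so the left-hand side is `⟨c, G c⟩` and the claim is
the energy identity `𝓔(G c, G c) = ⟨c, G c⟩`.

The truncations `u_N = ∑_{n<N} Pⁿ c` are finitely supported, so summation by parts applies to
them: `𝓔(u_N, u_N) = ⟨u_N, (I - P) u_N⟩ = ⟨u_N, c - P^N c⟩ = ∑_{n<N} (q_n - q_{n+N})` with
`q_k = ⟨c, P^k c⟩`, and this tends to `∑ q_k = ⟨c, G c⟩`. The squared gradients of `u_N`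
converge edgewise to those of `G c`, and no energy escapes to infinity: off the finitely many
edges where `u_M` has a nonzero gradient, the gradient of `u_N` is that of `u_N - u_M`, whose
energy is at most the tail `∑_{k ≥ 2M} |q_k|`.

Whether `∑ₙ pₙ(x, y)` converges does not depend on `x, y` (the lattice is connected). When it
diverges, `green` is `0` by the `tsum` convention, so `γ_V = 1` and both sides vanish.
-/

open Filter Topology Function

theorem hasSum_of_tendsto_of_tight {ι α : Type*} {l : Filter α} [l.NeBot]
    {b : α → ι → ℝ} {a : ι → ℝ} {L : ℝ} (hb_nonneg : ∀ N i, 0 ≤ b N i)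
    (hb : ∀ N, Summable (b N)) (hba : ∀ i, Tendsto (fun N => b N i) l (𝓝 (a i)))
    (hL : Tendsto (fun N => ∑' i, b N i) l (𝓝 L))
    (htight : ∀ ε > 0, ∃ s : Finset ι, ∀ᶠ N in l, ∑' i : ↥((s : Set ι)ᶜ), b N i ≤ ε) :
    HasSum a L := by
  have ha_nonneg : ∀ i, 0 ≤ a i := fun i => ge_of_tendsto' (hba i) fun N => hb_nonneg N i
  have hfin : ∀ s : Finset ι, Tendsto (fun N => ∑ i ∈ s, b N i) l (𝓝 (∑ i ∈ s, a i)) :=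
    fun s => tendsto_finsetSum s fun i _ => hba i
  have hle : ∀ s : Finset ι, ∑ i ∈ s, a i ≤ L := fun s =>
    le_of_tendsto_of_tendsto' (hfin s) hL fun N => (hb N).sum_le_tsum s fun i _ => hb_nonneg N i
  have ha : Summable a := summable_of_sum_le ha_nonneg hle
  refine ha.hasSum_iff.2 (le_antisymm (ha.tsum_le_of_sum_le hle) ?_)
  refine le_of_forall_pos_le_add fun ε hε => ?_
  obtain ⟨s, hs⟩ := htight ε hε
  have hsplit : ∀ᶠ N in l, ∑' i, b N i ≤ ∑ i ∈ s, b N i + ε := hs.mono fun N hN => by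
    rw [← (hb N).sum_add_tsum_compl (s := s)]
    linarith
  calc L ≤ ∑ i ∈ s, a i + ε := le_of_tendsto_of_tendsto hL ((hfin s).add_const ε) hsplit
    _ ≤ ∑' i, a i + ε := by
      gcongr
      exact ha.sum_le_tsum s fun i _ => ha_nonneg i

lemma abs_sum_Ico_sub_shift_le {q : ℕ → ℝ} (hq : Summable q) {M N : ℕ}
    (hMN : M ≤ N) :
    |∑ n ∈ Finset.Ico M N, (q (n + M) - q (n + N))| ≤ ∑' k, |q (k + (M + M))| := by
  rw [Finset.sum_sub_distrib, Finset.sum_Ico_add', Finset.sum_Ico_add']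
  calc |∑ k ∈ Finset.Ico (M + M) (N + M), q k - ∑ k ∈ Finset.Ico (M + N) (N + N), q k|
      ≤ ∑ k ∈ Finset.Ico (M + M) (N + M), |q k| + ∑ k ∈ Finset.Ico (M + N) (N + N), |q k| :=
        (abs_sub _ _).trans (add_le_add (Finset.abs_sum_le_sum_abs _ _)
          (Finset.abs_sum_le_sum_abs _ _))
    _ = ∑ k ∈ Finset.range (N + N - (M + M)), |q (k + (M + M))| := by
        rw [add_comm N M, Finset.sum_Ico_consecutive _ (by omega) (by omega),
          Finset.sum_Ico_eq_sum_range]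
        simp only [add_comm (M + M)]
    _ ≤ ∑' k, |q (k + (M + M))| :=
        ((summable_nat_add_iff _).2 hq.abs).sum_le_tsum _ fun _ _ => abs_nonneg _

lemma tendsto_sum_range_sub_shift {q : ℕ → ℝ} (hq : Summable q) :
    Tendsto (fun N => ∑ n ∈ Finset.range N, (q n - q (n + N))) atTop (𝓝 (∑' k, q k)) := by
  have htail : Tendsto (fun N => ∑ n ∈ Finset.range N, q (n + N)) atTop (𝓝 0) := by
    refine squeeze_zero_norm (fun N => ?_) (tendsto_sum_nat_add fun k => |q k|)
    calc ‖∑ n ∈ Finset.range N, q (n + N)‖ ≤ ∑ n ∈ Finset.range N, |q (n + N)| :=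
          Finset.abs_sum_le_sum_abs _ _
      _ ≤ ∑' k, |q (k + N)| :=
          ((summable_nat_add_iff N).2 hq.abs).sum_le_tsum _ fun _ _ => abs_nonneg _
  simpa only [Finset.sum_sub_distrib, sub_zero] using hq.hasSum.tendsto_sum_nat.sub htail

lemma eq_zero_of_notMem_toFinset {ι M : Type*} [Zero M] {f : ι → M} (hf : (support f).Finite)
    {x : ι} (hx : x ∉ hf.toFinset) : f x = 0 :=
  notMem_support.1 (mt hf.mem_toFinset.2 hx)

lemma tsum_mul_eq_sum {ι R : Type*} [NonUnitalNonAssocSemiring R] [TopologicalSpace R]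
    {f : ι → R} (hf : (support f).Finite) (g : ι → R) :
    ∑' y, g y * f y = ∑ y ∈ hf.toFinset, g y * f y :=
  tsum_eq_sum fun _ hy => by rw [eq_zero_of_notMem_toFinset hf hy, mul_zero]
namespace SimpleRandomWalk

variable {d : ℕ}

def nbhd (x : Zd d) : Finset (Zd d) :=
  Finset.univ.image fun p : Fin d × Bool => x + Pi.single p.1 (if p.2 then 1 else -1)

lemma sum_abs_single (i : Fin d) (a : ℤ) : ∑ j, |(Pi.single i a : Zd d) j| = |a| := by
  simp_rw [Pi.apply_single (fun _ => abs) (fun _ => abs_zero)]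
  simp

lemma eq_single_of_sum_abs_eq_one {v : Zd d} (h : ∑ j, |v j| = 1) :
    ∃ i, |v i| = 1 ∧ v = Pi.single i (v i) := by
  obtain ⟨i, hi⟩ : ∃ i, v i ≠ 0 := by
    by_contra! h0
    simp [h0] at h
  have hsplit := Finset.add_sum_erase Finset.univ (fun j => |v j|) (Finset.mem_univ i)
  have hrest : 0 ≤ ∑ j ∈ Finset.univ.erase i, |v j| := Finset.sum_nonneg fun j _ => abs_nonneg _
  have hvi : |v i| = 1 := by linarith [Int.one_le_abs hi]
  have hzero : ∀ j ∈ Finset.univ.erase i, |v j| = 0 :=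
    (Finset.sum_eq_zero_iff_of_nonneg fun j _ => abs_nonneg _).1 (by linarith)
  refine ⟨i, hvi, funext fun j => ?_⟩
  by_cases hj : j = i
  · subst hj; simp
  · simpa [hj] using hzero j (Finset.mem_erase.2 ⟨hj, Finset.mem_univ j⟩)

lemma mem_nbhd {x y : Zd d} : y ∈ nbhd x ↔ ∑ i, |x i - y i| = 1 := by
  simp only [nbhd, Finset.mem_image, Finset.mem_univ, true_and, Prod.exists]
  constructor
  · rintro ⟨i, b, rfl⟩
    have := sum_abs_single (d := d) i (if b then 1 else -1)
    cases b <;> simpa using this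
  · intro h
    have h' : ∑ j, |(y - x) j| = 1 := by simpa [abs_sub_comm] using h
    obtain ⟨i, hi, hv⟩ := eq_single_of_sum_abs_eq_one h'
    rcases abs_eq (zero_le_one' ℤ) |>.1 hi with h1 | h1 <;> rw [h1] at hv
    exacts [⟨i, true, (sub_eq_iff_eq_add'.1 hv).symm⟩, ⟨i, false, (sub_eq_iff_eq_add'.1 hv).symm⟩]

lemma add_single_mem_nbhd (x : Zd d) (i : Fin d) (b : Bool) :
    x + Pi.single i (if b then 1 else -1) ∈ nbhd x :=
  Finset.mem_image.2 ⟨(i, b), Finset.mem_univ _, rfl⟩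

lemma card_nbhd (x : Zd d) : (nbhd x).card = 2 * d := by
  rw [nbhd, Finset.card_image_of_injective]
  · simp [mul_comm]
  rintro ⟨i, b⟩ ⟨j, b'⟩ h
  have hi := congrFun (add_left_cancel h) i
  by_cases hij : i = j
  · subst hij
    cases b <;> cases b' <;> simp_all
  · cases b <;> cases b' <;> simp [hij] at hi

lemma mem_nbhd_comm {x y : Zd d} : y ∈ nbhd x ↔ x ∈ nbhd y := by
  simp only [mem_nbhd, abs_sub_comm (x _)]

theorem induction_nbhd {P : Zd d → Prop} {x : Zd d} (hx : P x)
    (hstep : ∀ y, P y → ∀ z ∈ nbhd y, P z) (y : Zd d) : P y := by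
  have hline : ∀ w i (k : ℤ), P w → P (w + Pi.single i k) := by
    intro w i k hw
    induction k using Int.induction_on with
    | zero => simpa using hw
    | succ n ih =>
      simpa [add_assoc, ← Pi.single_add] using hstep _ ih _ (add_single_mem_nbhd _ i true)
    | pred n ih =>
      simpa [add_assoc, ← Pi.single_add, sub_eq_add_neg] using
        hstep _ ih _ (add_single_mem_nbhd _ i false)
  have hbox : ∀ s : Finset (Fin d), P (x + ∑ i ∈ s, Pi.single i ((y - x) i)) := by
    intro s
    induction s using Finset.induction_on with
    | empty => simpa using hx
    | insert i s hi ih =>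
      rw [Finset.sum_insert hi, add_comm (Pi.single _ _), ← add_assoc]
      exact hline _ i _ ih
  simpa only [Finset.univ_sum_single, add_sub_cancel] using hbox Finset.univ

lemma srwStep_eq_ite (x y : Zd d) :
    srwStep d x y = if y ∈ nbhd x then 1 / (2 * (d : ℝ)) else 0 := by
  simp only [srwStep, mem_nbhd]

lemma srwStep_comm (x y : Zd d) : srwStep d x y = srwStep d y x := by
  simp only [srwStep_eq_ite, mem_nbhd_comm]

lemma srwStep_nonneg (x y : Zd d) : 0 ≤ srwStep d x y := by
  rw [srwStep_eq_ite]; split_ifs <;> positivity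

lemma srwStep_eq_zero {x y : Zd d} (h : y ∉ nbhd x) : srwStep d x y = 0 := by
  rw [srwStep_eq_ite, if_neg h]

lemma sum_nbhd_srwStep (hd : d ≠ 0) (x : Zd d) : ∑ y ∈ nbhd x, srwStep d x y = 1 := by
  rw [Finset.sum_congr rfl fun y hy => by rw [srwStep_eq_ite, if_pos hy], Finset.sum_const,
    card_nbhd, nsmul_eq_mul]
  push_cast
  field_simp

lemma tsum_srwStep_mul (x : Zd d) (f : Zd d → ℝ) :
    ∑' y, srwStep d x y * f y = ∑ y ∈ nbhd x, srwStep d x y * f y :=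
  tsum_eq_sum fun y hy => by rw [srwStep_eq_zero hy, zero_mul]

lemma summable_srwStep_mul (x : Zd d) (f : Zd d → ℝ) : Summable fun y => srwStep d x y * f y :=
  summable_of_ne_finset_zero (s := nbhd x) fun y hy => by rw [srwStep_eq_zero hy, zero_mul]

def transOp (d : ℕ) (f : Zd d → ℝ) (x : Zd d) : ℝ := ∑' y, srwStep d x y * f y

lemma transOp_eq_sum (f : Zd d → ℝ) (x : Zd d) :
    transOp d f x = ∑ y ∈ nbhd x, srwStep d x y * f y :=
  tsum_srwStep_mul x f

lemma transOp_sum {ι : Type*} (s : Finset ι) (f : ι → Zd d → ℝ) :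
    transOp d (∑ i ∈ s, f i) = ∑ i ∈ s, transOp d (f i) := by
  funext x
  simp only [transOp_eq_sum, Finset.sum_apply, Finset.mul_sum]
  exact Finset.sum_comm

lemma sub_transOp_apply (hd : d ≠ 0) (f : Zd d → ℝ) (x : Zd d) :
    f x - transOp d f x = ∑' y, srwStep d x y * (f x - f y) := by
  rw [tsum_srwStep_mul, transOp_eq_sum]
  simp only [mul_sub, Finset.sum_sub_distrib, ← Finset.sum_mul, sum_nbhd_srwStep hd, one_mul]

lemma support_transOp_finite {f : Zd d → ℝ} (hf : (support f).Finite) :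
    (support (transOp d f)).Finite := by
  refine (hf.toFinset.biUnion nbhd).finite_toSet.subset fun x hx => ?_
  rw [mem_support, transOp_eq_sum] at hx
  obtain ⟨y, hy, hxy⟩ := Finset.exists_ne_zero_of_sum_ne_zero hx
  exact Finset.mem_biUnion.2 ⟨y, hf.mem_toFinset.2 (right_ne_zero_of_mul hxy), mem_nbhd_comm.1 hy⟩

lemma support_iterate_transOp_finite {f : Zd d → ℝ} (hf : (support f).Finite) (n : ℕ) :
    (support ((transOp d)^[n] f)).Finite := by
  induction n with
  | zero => exact hf
  | succ n ih => rw [iterate_succ_apply']; exact support_transOp_finite ih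

lemma pairZ_eq_sum {f : Zd d → ℝ} (hf : (support f).Finite) (g : Zd d → ℝ) :
    pairZ d f g = ∑ x ∈ hf.toFinset, f x * g x :=
  tsum_eq_sum fun _ hx => by rw [eq_zero_of_notMem_toFinset hf hx, zero_mul]

lemma pairZ_sum_left {ι : Type*} (s : Finset ι) {f : ι → Zd d → ℝ}
    (hf : ∀ i, (support (f i)).Finite) (g : Zd d → ℝ) :
    pairZ d (∑ i ∈ s, f i) g = ∑ i ∈ s, pairZ d (f i) g := by
  simp only [pairZ, Finset.sum_apply, Finset.sum_mul]
  exact Summable.tsum_finsetSum fun i _ =>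
    summable_of_hasFiniteSupport (Function.HasFiniteSupport.mul_left (hf i) g)

lemma pairZ_sub_right {f : Zd d → ℝ} (hf : (support f).Finite) (g h : Zd d → ℝ) :
    pairZ d f (g - h) = pairZ d f g - pairZ d f h := by
  simp only [pairZ_eq_sum hf, Pi.sub_apply, mul_sub, Finset.sum_sub_distrib]

lemma pairZ_transOp_comm {f : Zd d → ℝ} (hf : (support f).Finite) (g : Zd d → ℝ) :
    pairZ d (transOp d f) g = pairZ d f (transOp d g) := by
  have hPf : ∀ x, transOp d f x = ∑ y ∈ hf.toFinset, srwStep d x y * f y := fun x =>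
    tsum_mul_eq_sum hf _
  calc pairZ d (transOp d f) g
      = ∑' x, ∑ y ∈ hf.toFinset, f y * (srwStep d y x * g x) := tsum_congr fun x => by
        rw [hPf, Finset.sum_mul]
        exact Finset.sum_congr rfl fun y _ => by rw [srwStep_comm]; ring
    _ = ∑ y ∈ hf.toFinset, f y * transOp d g y := by
        rw [Summable.tsum_finsetSum fun y _ => (summable_srwStep_mul y g).mul_left (f y)]
        exact Finset.sum_congr rfl fun y _ => tsum_mul_left
    _ = pairZ d f (transOp d g) := (pairZ_eq_sum hf _).symm

lemma pairZ_iterate_transOp_comm {f : Zd d → ℝ} (hf : (support f).Finite) (g : Zd d → ℝ)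
    (n : ℕ) : pairZ d ((transOp d)^[n] f) g = pairZ d f ((transOp d)^[n] g) := by
  induction n generalizing g with
  | zero => rfl
  | succ n ih =>
    rw [iterate_succ_apply', pairZ_transOp_comm (support_iterate_transOp_finite hf n), ih,
      ← iterate_succ_apply]

lemma pairZ_single_one_left (x : Zd d) (g : Zd d → ℝ) : pairZ d (Pi.single x 1) g = g x := by
  simp [pairZ, Pi.single_apply]

lemma srwP_succ (n : ℕ) (x : Zd d) : srwP d (n + 1) x = transOp d (srwP d n x) :=
  funext fun y => tsum_congr fun z => by rw [mul_comm, srwStep_comm]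

lemma srwP_eq_iterate (n : ℕ) (x : Zd d) : srwP d n x = (transOp d)^[n] (Pi.single x 1) := by
  induction n with
  | zero => funext y; simp [srwP, Pi.single_apply, eq_comm]
  | succ n ih => rw [srwP_succ, ih, iterate_succ_apply']

lemma iterate_transOp_apply (f : Zd d → ℝ) (n : ℕ) (x : Zd d) :
    (transOp d)^[n] f x = ∑' y, srwP d n x y * f y := by
  rw [srwP_eq_iterate, ← pairZ_single_one_left x ((transOp d)^[n] f)]
  exact (pairZ_iterate_transOp_comm
    ((Set.finite_singleton x).subset Pi.support_single_subset) f n).symm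

lemma srwP_comm (n : ℕ) (x y : Zd d) : srwP d n x y = srwP d n y x := by
  rw [srwP_eq_iterate n y, iterate_transOp_apply]
  simp [Pi.single_apply]

lemma srwP_nonneg (n : ℕ) (x y : Zd d) : 0 ≤ srwP d n x y := by
  induction n generalizing y with
  | zero => simp only [srwP]; split_ifs <;> norm_num
  | succ n ih => exact tsum_nonneg fun z => mul_nonneg (ih z) (srwStep_nonneg z y)

lemma srwP_le_srwP_succ (x : Zd d) {y z : Zd d} (hz : z ∈ nbhd y) (n : ℕ) :
    srwP d n x z ≤ 2 * d * srwP d (n + 1) x y := by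
  have hd : (0 : ℝ) < d := Nat.cast_pos.2 (Nat.pos_of_ne_zero (by rintro rfl; simp [nbhd] at hz))
  have hle : srwStep d y z * srwP d n x z ≤ srwP d (n + 1) x y := by
    rw [srwP_succ, transOp_eq_sum]
    exact Finset.single_le_sum (f := fun w => srwStep d y w * srwP d n x w)
      (fun w _ => mul_nonneg (srwStep_nonneg y w) (srwP_nonneg n x w)) hz
  rw [srwStep_eq_ite, if_pos hz] at hle
  calc srwP d n x z = 2 * d * (1 / (2 * d) * srwP d n x z) := by field_simp
    _ ≤ 2 * d * srwP d (n + 1) x y := by gcongr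

lemma summable_srwP_of_mem_nbhd {x y z : Zd d} (hz : z ∈ nbhd y)
    (h : Summable fun n => srwP d n x y) : Summable fun n => srwP d n x z :=
  Summable.of_nonneg_of_le (fun n => srwP_nonneg n x z) (srwP_le_srwP_succ x hz)
    (((summable_nat_add_iff 1).2 h).mul_left _)

theorem summable_srwP_of_summable {x₀ y₀ : Zd d} (h : Summable fun n => srwP d n x₀ y₀)
    (x y : Zd d) : Summable fun n => srwP d n x y := by
  have hrow : ∀ y, Summable fun n => srwP d n x₀ y :=
    induction_nbhd h fun _ hy _ hz => summable_srwP_of_mem_nbhd hz hy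
  have hcol : ∀ x, Summable fun n => srwP d n y x :=
    induction_nbhd ((hrow y).congr fun n => srwP_comm n x₀ y)
      fun _ hx _ hz => summable_srwP_of_mem_nbhd hz hx
  exact (hcol x).congr fun n => srwP_comm n y x

lemma Gop_eq_zero_of_not_summable (hG : ¬∀ x y : Zd d, Summable fun n => srwP d n x y)
    (f : Zd d → ℝ) : Gop d f = 0 := by
  simp only [not_forall] at hG
  obtain ⟨x₀, y₀, h⟩ := hG
  funext x
  have hgreen : ∀ y, green d x y = 0 := fun y =>
    tsum_eq_zero_of_not_summable fun hxy => h (summable_srwP_of_summable hxy x₀ y₀)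
  simp [Gop, hgreen]

def gradSq (f : Zd d → ℝ) (p : Zd d × Zd d) : ℝ :=
  if (∑ i, |p.1 i - p.2 i|) = 1 then (f p.2 - f p.1) * (f p.2 - f p.1) else 0

lemma dirichletZ_self (f : Zd d → ℝ) :
    dirichletZ d f f = 1 / (4 * (d : ℝ)) * ∑' p, gradSq f p := rfl

def edgeTerm (f : Zd d → ℝ) (p : Zd d × Zd d) : ℝ :=
  srwStep d p.1 p.2 * (f p.1 * (f p.1 - f p.2))

lemma gradSq_nonneg (f : Zd d → ℝ) (p : Zd d × Zd d) : 0 ≤ gradSq f p := by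
  unfold gradSq; split_ifs
  exacts [mul_self_nonneg _, le_rfl]

lemma gradSq_eq_edgeTerm (f : Zd d → ℝ) (p : Zd d × Zd d) :
    gradSq f p = 2 * d * (edgeTerm f p + edgeTerm f p.swap) := by
  by_cases hd : d = 0
  · subst hd; simp [gradSq]
  simp only [edgeTerm, Prod.fst_swap, Prod.snd_swap]
  rw [srwStep_comm p.2 p.1]
  simp only [gradSq, srwStep]
  split_ifs
  · field_simp; ring
  · simp

lemma gradSq_add_of_gradSq_eq_zero {f : Zd d → ℝ} {p : Zd d × Zd d} (hf : gradSq f p = 0)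
    (g : Zd d → ℝ) : gradSq (f + g) p = gradSq g p := by
  unfold gradSq at hf ⊢
  split_ifs at hf ⊢
  · have : f p.2 = f p.1 := sub_eq_zero.1 (mul_self_eq_zero.1 hf)
    simp only [Pi.add_apply, this, add_sub_add_left_eq_sub]
  · rfl

lemma support_edgeTerm_finite {f : Zd d → ℝ} (hf : (support f).Finite) :
    (support (edgeTerm f)).Finite := by
  refine (hf.toFinset ×ˢ hf.toFinset.biUnion nbhd).finite_toSet.subset fun p hp => ?_
  have hstep := left_ne_zero_of_mul hp
  have hfp := hf.mem_toFinset.2 (left_ne_zero_of_mul (right_ne_zero_of_mul hp))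
  have hnb : p.2 ∈ nbhd p.1 := by_contra fun h => hstep (srwStep_eq_zero h)
  exact Finset.mem_product.2 ⟨hfp, Finset.mem_biUnion.2 ⟨p.1, hfp, hnb⟩⟩

lemma support_gradSq_finite {f : Zd d → ℝ} (hf : (support f).Finite) :
    (support (gradSq f)).Finite := by
  have hE := support_edgeTerm_finite hf
  refine (hE.union (hE.preimage Prod.swap_injective.injOn)).subset fun p hp => ?_
  by_contra h
  simp only [Set.mem_union, mem_support, Set.mem_preimage, not_or, not_not] at h
  exact hp (by rw [gradSq_eq_edgeTerm, h.1, h.2]; ring)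

theorem tsum_gradSq (hd : d ≠ 0) {f : Zd d → ℝ} (hf : (support f).Finite) :
    ∑' p, gradSq f p = 4 * d * pairZ d f (f - transOp d f) := by
  have hA : Summable (edgeTerm f) := summable_of_hasFiniteSupport (support_edgeTerm_finite hf)
  have hB : Summable fun p : Zd d × Zd d => edgeTerm f p.swap :=
    hA.comp_injective Prod.swap_injective
  have hswap : ∑' p : Zd d × Zd d, edgeTerm f p.swap = ∑' p, edgeTerm f p :=
    (Equiv.prodComm _ _).tsum_eq (edgeTerm f)
  have hrows : ∑' p, edgeTerm f p = pairZ d f (f - transOp d f) := by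
    rw [hA.tsum_prod]
    refine tsum_congr fun x => ?_
    simp only [edgeTerm, Pi.sub_apply, sub_transOp_apply hd, ← tsum_mul_left]
    exact tsum_congr fun y => by ring
  rw [tsum_congr (gradSq_eq_edgeTerm f), tsum_mul_left, hA.tsum_add hB, hswap, hrows]
  ring

section Truncation

variable {c : Zd d → ℝ}

def truncGreen (c : Zd d → ℝ) (M N : ℕ) : Zd d → ℝ := ∑ n ∈ Finset.Ico M N, (transOp d)^[n] c

def corr (c : Zd d → ℝ) (k : ℕ) : ℝ := pairZ d c ((transOp d)^[k] c)

lemma support_truncGreen_finite (hc : (support c).Finite) (M N : ℕ) :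
    (support (truncGreen c M N)).Finite := by
  rw [truncGreen, Finset.sum_fn]
  exact Function.HasFiniteSupport.sum (fun n => support_iterate_transOp_finite hc n) _

lemma truncGreen_add {M N : ℕ} (hMN : M ≤ N) :
    truncGreen c 0 M + truncGreen c M N = truncGreen c 0 N :=
  Finset.sum_Ico_consecutive _ (Nat.zero_le M) hMN

lemma truncGreen_sub_transOp {M N : ℕ} (hMN : M ≤ N) :
    truncGreen c M N - transOp d (truncGreen c M N) = (transOp d)^[M] c - (transOp d)^[N] c := by
  rw [truncGreen, transOp_sum, ← Finset.sum_sub_distrib, ← neg_sub,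
    ← Finset.sum_Ico_sub (fun n => (transOp d)^[n] c) hMN, ← Finset.sum_neg_distrib]
  exact Finset.sum_congr rfl fun n _ => by rw [iterate_succ_apply', neg_sub]

theorem tsum_gradSq_truncGreen (hd : d ≠ 0) (hc : (support c).Finite) {M N : ℕ} (hMN : M ≤ N) :
    ∑' p, gradSq (truncGreen c M N) p
      = 4 * d * ∑ n ∈ Finset.Ico M N, (corr c (n + M) - corr c (n + N)) := by
  rw [tsum_gradSq hd (support_truncGreen_finite hc M N), truncGreen_sub_transOp hMN, truncGreen,
    pairZ_sum_left _ (support_iterate_transOp_finite hc)]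
  refine congrArg _ (Finset.sum_congr rfl fun n _ => ?_)
  rw [pairZ_sub_right (support_iterate_transOp_finite hc n), pairZ_iterate_transOp_comm hc,
    pairZ_iterate_transOp_comm hc, corr, corr, iterate_add_apply, iterate_add_apply]

lemma hasSum_iterate_transOp (hG : ∀ x y : Zd d, Summable fun n => srwP d n x y)
    (hc : (support c).Finite) (x : Zd d) :
    HasSum (fun n => (transOp d)^[n] c x) (Gop d c x) := by
  simp only [iterate_transOp_apply, Gop, tsum_mul_eq_sum hc]
  exact hasSum_sum fun y _ => (hG x y).hasSum.mul_right (c y)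

lemma hasSum_corr (hG : ∀ x y : Zd d, Summable fun n => srwP d n x y)
    (hc : (support c).Finite) : HasSum (corr c) (pairZ d c (Gop d c)) := by
  rw [show corr c = fun k => ∑ x ∈ hc.toFinset, c x * (transOp d)^[k] c x from
    funext fun k => pairZ_eq_sum hc _, pairZ_eq_sum hc]
  exact hasSum_sum fun x _ => (hasSum_iterate_transOp hG hc x).mul_left (c x)

lemma tendsto_gradSq_truncGreen (hG : ∀ x y : Zd d, Summable fun n => srwP d n x y)
    (hc : (support c).Finite) (p : Zd d × Zd d) :
    Tendsto (fun N => gradSq (truncGreen c 0 N) p) atTop (𝓝 (gradSq (Gop d c) p)) := by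
  have hu : ∀ x, Tendsto (fun N => truncGreen c 0 N x) atTop (𝓝 (Gop d c x)) := fun x => by
    simpa [truncGreen, Finset.sum_apply, ← Finset.range_eq_Ico] using
      (hasSum_iterate_transOp hG hc x).tendsto_sum_nat
  unfold gradSq
  split_ifs
  · have h := (hu p.2).sub (hu p.1)
    exact h.mul h
  · exact tendsto_const_nhds

theorem hasSum_gradSq_Gop (hd : d ≠ 0) (hG : ∀ x y : Zd d, Summable fun n => srwP d n x y)
    (hc : (support c).Finite) : HasSum (gradSq (Gop d c)) (4 * d * pairZ d c (Gop d c)) := by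
  have hq := hasSum_corr hG hc
  have hsupp N := support_gradSq_finite (support_truncGreen_finite hc 0 N)
  refine hasSum_of_tendsto_of_tight (fun N => gradSq_nonneg _)
    (fun N => summable_of_hasFiniteSupport (hsupp N)) (tendsto_gradSq_truncGreen hG hc) ?_ ?_
  · rw [← hq.tsum_eq]
    refine ((tendsto_sum_range_sub_shift hq.summable).const_mul _).congr fun N => ?_
    rw [tsum_gradSq_truncGreen hd hc (Nat.zero_le N), Finset.range_eq_Ico]
    simp only [add_zero]
  · intro ε hε
    have htail : Tendsto (fun M => 4 * d * ∑' k, |corr c (k + (M + M))|) atTop (𝓝 0) := by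
      have h2M : Tendsto (fun M : ℕ => M + M) atTop atTop :=
        tendsto_atTop_mono (fun M => Nat.le_add_right M M) tendsto_id
      simpa only [mul_zero, comp_apply] using
        ((tendsto_sum_nat_add fun k => |corr c k|).comp h2M).const_mul (4 * (d : ℝ))
    obtain ⟨M, hM⟩ := (htail.eventually (ge_mem_nhds hε)).exists
    obtain ⟨s, hs⟩ : ∃ s : Finset (Zd d × Zd d), ∀ p ∉ s, gradSq (truncGreen c 0 M) p = 0 :=
      ⟨(hsupp M).toFinset, fun _ hp => eq_zero_of_notMem_toFinset (hsupp M) hp⟩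
    refine ⟨s, eventually_atTop.2 ⟨M, fun N hMN => ?_⟩⟩
    calc ∑' p : ↥((s : Set (Zd d × Zd d))ᶜ), gradSq (truncGreen c 0 N) p
        = ∑' p : ↥((s : Set (Zd d × Zd d))ᶜ), gradSq (truncGreen c M N) p :=
          tsum_congr fun p => by
            rw [← truncGreen_add hMN]
            exact gradSq_add_of_gradSq_eq_zero (hs p p.2) _
      _ ≤ ∑' p, gradSq (truncGreen c M N) p :=
          Summable.tsum_subtype_le (gradSq (truncGreen c M N)) _ (gradSq_nonneg _)
            (summable_of_hasFiniteSupport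
              (support_gradSq_finite (support_truncGreen_finite hc M N)))
      _ = 4 * d * ∑ n ∈ Finset.Ico M N, (corr c (n + M) - corr c (n + N)) :=
          tsum_gradSq_truncGreen hd hc hMN
      _ ≤ 4 * d * ∑' k, |corr c (k + (M + M))| := by
          gcongr
          exact (le_abs_self _).trans (abs_sum_Ico_sub_shift_le hq.summable hMN)
      _ ≤ ε := hM

theorem dirichletZ_Gop_self (hd : d ≠ 0) (hc : (support c).Finite) :
    dirichletZ d (Gop d c) (Gop d c) = pairZ d c (Gop d c) := by
  by_cases hG : ∀ x y : Zd d, Summable fun n => srwP d n x y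
  · rw [dirichletZ_self, (hasSum_gradSq_Gop hd hG hc).tsum_eq]
    field_simp
  · simp [Gop_eq_zero_of_not_summable hG, dirichletZ, pairZ]

end Truncation

lemma green_nonneg (x y : Zd d) : 0 ≤ green d x y := tsum_nonneg fun n => srwP_nonneg n x y

lemma Gop_nonneg {f : Zd d → ℝ} (hf : 0 ≤ f) (x : Zd d) : 0 ≤ Gop d f x :=
  tsum_nonneg fun y => mul_nonneg (green_nonneg x y) (hf y)

lemma Gop_eq_sum {f : Zd d → ℝ} {s : Finset (Zd d)} (hs : ∀ y ∉ s, f y = 0) (x : Zd d) :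
    Gop d f x = ∑ y ∈ s, green d x y * f y :=
  tsum_eq_sum fun y hy => by rw [hs y hy, mul_zero]

variable {V : Zd d → ℝ}

lemma abs_GVop_le (hV : (support V).Finite) {κ : ℝ} (hκ : ∀ x, Gop d (fun y => |V y|) x ≤ κ)
    {g : Zd d → ℝ} {M : ℝ} (hM : 0 ≤ M) (hg : ∀ y, |g y| ≤ M) (x : Zd d) :
    |GVop d V g x| ≤ κ * M := by
  have hV0 : ∀ y ∉ hV.toFinset, V y = 0 := fun _ hy => eq_zero_of_notMem_toFinset hV hy
  calc |GVop d V g x| = |∑ y ∈ hV.toFinset, green d x y * (V y * g y)| := by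
        rw [GVop, Gop_eq_sum fun y hy => by rw [hV0 y hy, zero_mul]]
    _ ≤ ∑ y ∈ hV.toFinset, green d x y * |V y| * M := by
        refine (Finset.abs_sum_le_sum_abs _ _).trans (Finset.sum_le_sum fun y _ => ?_)
        rw [abs_mul, abs_mul, abs_of_nonneg (green_nonneg x y), mul_assoc]
        exact mul_le_mul_of_nonneg_left (mul_le_mul_of_nonneg_left (hg y) (abs_nonneg _))
          (green_nonneg x y)
    _ = Gop d (fun y => |V y|) x * M := by
        rw [Gop_eq_sum fun y hy => by rw [hV0 y hy, abs_zero], Finset.sum_mul]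
    _ ≤ κ * M := by gcongr; exact hκ x

lemma abs_iterate_GVop_le (hV : (support V).Finite) {κ : ℝ}
    (hκ : ∀ x, Gop d (fun y => |V y|) x ≤ κ) (n : ℕ) (x : Zd d) :
    |(GVop d V)^[n] (fun _ => 1) x| ≤ κ ^ n := by
  have hκ0 : 0 ≤ κ := (Gop_nonneg (fun y => abs_nonneg (V y)) x).trans (hκ x)
  induction n generalizing x with
  | zero => simp
  | succ n ih =>
    rw [iterate_succ_apply', pow_succ']
    exact abs_GVop_le hV hκ (pow_nonneg hκ0 n) ih x

theorem gaugeFn_sub_one (hV : (support V).Finite) (hGV : greenNormLtOne d V) :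
    (fun x => gaugeFn d V x - 1) = Gop d (fun y => V y * gaugeFn d V y) := by
  obtain ⟨c, hc1, hc⟩ := hGV
  have hc0 : 0 ≤ c := (Gop_nonneg (fun y => abs_nonneg (V y)) 0).trans (hc 0)
  have hsum : ∀ x, Summable fun n => (GVop d V)^[n] (fun _ => 1) x := fun x =>
    Summable.of_norm_bounded (summable_geometric_of_lt_one hc0 hc1)
      fun n => abs_iterate_GVop_le hV hc n x
  have hV0 : ∀ y ∉ hV.toFinset, V y = 0 := fun _ hy => eq_zero_of_notMem_toFinset hV hy
  have hVf : ∀ f : Zd d → ℝ, ∀ y ∉ hV.toFinset, V y * f y = 0 := fun f y hy => by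
    rw [hV0 y hy, zero_mul]
  funext x
  rw [gaugeFn, neumann, (hsum x).tsum_eq_zero_add, iterate_zero_apply, add_sub_cancel_left]
  simp only [iterate_succ_apply', GVop, Gop_eq_sum (hVf _)]
  rw [Summable.tsum_finsetSum fun y _ => ((hsum y).mul_left (V y)).mul_left (green d x y)]
  exact Finset.sum_congr rfl fun y _ => by rw [tsum_mul_left, tsum_mul_left]; rfl

end SimpleRandomWalk

open SimpleRandomWalk in
/-- Energy identity for the gauge function:
`⟨V, γ_V²⟩ − ⟨V, γ_V⟩ = 𝓔_{ℤ^d}(γ_V − 1, γ_V − 1)`. -/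
theorem gauge_dirichlet_identity (d : ℕ) (hd : 3 ≤ d) (V : Zd d → ℝ)
    (hVfin : (Function.support V).Finite) (hV : greenNormLtOne d V) :
    pairZ d V (fun x => (gaugeFn d V x) ^ 2) - pairZ d V (gaugeFn d V)
      = dirichletZ d (fun x => gaugeFn d V x - 1) (fun x => gaugeFn d V x - 1) := by
  have hc : (support fun y => V y * gaugeFn d V y).Finite :=
    hVfin.subset (support_mul_subset_left _ _)
  calc pairZ d V (fun x => (gaugeFn d V x) ^ 2) - pairZ d V (gaugeFn d V)
      = pairZ d (fun y => V y * gaugeFn d V y) (fun x => gaugeFn d V x - 1) := by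
        rw [← pairZ_sub_right hVfin]
        exact tsum_congr fun x => by simp only [Pi.sub_apply]; ring
    _ = dirichletZ d (fun x => gaugeFn d V x - 1) (fun x => gaugeFn d V x - 1) := by
        rw [gaugeFn_sub_one hVfin hV, dirichletZ_Gop_self (by omega) hc]
end
end

section
/- Fix R > 0 and let μ, ν be non-zero non-negative finite Radon measures on the box B_R = [−R,R]^d. With d_{BL,R} the bounded Lipschitz distance and d_R(μ,ν) = |μ(B_R) − ν(B_R)| + d_{W,B_R}(μ/μ(B_R), ν/ν(B_R)), one has (μ(B_R) ∧ ν(B_R) + 1)^{-1} d_{BL,R}(μ,ν) ≤ d_R(μ,ν) ≤ d_{BL,R}(μ,ν) · (1 + 2((√d R) ∨ 1)/(μ(B_R) ∨ ν(B_R))). -/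
open MeasureTheory

noncomputable section

/-- The closed box `B_R = [−R,R]^d ⊆ ℝ^d`. -/
def boxR (d : ℕ) (R : ℝ) : Set (EuclideanSpace ℝ (Fin d)) := {x | ∀ i, |x i| ≤ R}

/-- The 1-Wasserstein (Kantorovich–Rubinstein) distance on `B_R`:
`sup_{η ∈ Lip_1(B_R)} (∫ η dP − ∫ η dQ)`. -/
def dW (d : ℕ) (R : ℝ) (P Q : Measure (EuclideanSpace ℝ (Fin d))) : ℝ :=
  sSup {r : ℝ | ∃ η : EuclideanSpace ℝ (Fin d) → ℝ,
    LipschitzOnWith 1 η (boxR d R) ∧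
    r = (∫ x in boxR d R, η x ∂P) - ∫ x in boxR d R, η x ∂Q}

/-- The bounded Lipschitz distance on `B_R`:
`sup {∫ η dμ − ∫ η dν : η ∈ Lip_1(B_R), ‖η‖_∞ ≤ 1}`. -/
def dBL (d : ℕ) (R : ℝ) (μ ν : Measure (EuclideanSpace ℝ (Fin d))) : ℝ :=
  sSup {r : ℝ | ∃ η : EuclideanSpace ℝ (Fin d) → ℝ,
    LipschitzOnWith 1 η (boxR d R) ∧ (∀ x ∈ boxR d R, |η x| ≤ 1) ∧
    r = (∫ x in boxR d R, η x ∂μ) - ∫ x in boxR d R, η x ∂ν}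

/-- The distance `d_R(μ,ν) = |μ(B_R) − ν(B_R)| + d_{W,B_R}(μ/μ(B_R), ν/ν(B_R))` for
non-zero non-negative measures. -/
def dRdist (d : ℕ) (R : ℝ) (μ ν : Measure (EuclideanSpace ℝ (Fin d))) : ℝ :=
  |(μ (boxR d R)).toReal - (ν (boxR d R)).toReal|
    + dW d R ((μ (boxR d R))⁻¹ • μ) ((ν (boxR d R))⁻¹ • ν)


/-!
Write `m = μ(B_R)`, `n = ν(B_R)` and `⨍` for averages over `B_R`, so that `d_W` of the
normalised measures is a supremum of differences of averages `⨍η dμ − ⨍η dν`.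

Lower bound: for a bounded Lipschitz test function `η`, `∫η dμ − ∫η dν = m α − n β` with
`α = ⨍η dμ`, `β = ⨍η dν` in `[−1, 1]` and `α − β ≤ d_W`, and
`m α − n β = (m ∧ n)(α − β) ± (m − n)·(α or β) ≤ (m ∧ n) d_W + |m − n|`.

Upper bound: the constants `±1` give `|m − n| ≤ d_BL`. A `1`-Lipschitz `η` may be replaced by
`η − η(0)` without changing the difference of averages; then `|η| ≤ √d R ≤ L := (√d R) ∨ 1` on
`B_R`, so `L⁻¹ η` is a test function for `d_BL` and `m α − n β ≤ L d_BL`. If, say, `m ≤ n`,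
`n (α − β) = (m α − n β) + (n − m) α ≤ 2 L d_BL`.
-/

section Box

variable {d : ℕ} {R : ℝ}

lemma isClosed_boxR : IsClosed (boxR d R) := by
  simp only [boxR, Set.ofPred_forall]
  exact isClosed_iInter fun i => isClosed_le (by fun_prop) continuous_const

lemma zero_mem_boxR (hR : 0 ≤ R) : (0 : EuclideanSpace ℝ (Fin d)) ∈ boxR d R :=
  fun i => by simpa using hR

lemma norm_le_of_mem_boxR (hR : 0 ≤ R) {x : EuclideanSpace ℝ (Fin d)} (hx : x ∈ boxR d R) :
    ‖x‖ ≤ √d * R := by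
  have hsum : ∑ i, ‖x i‖ ^ 2 ≤ d * R ^ 2 := by
    calc ∑ i, ‖x i‖ ^ 2 ≤ ∑ _i : Fin d, R ^ 2 :=
          Finset.sum_le_sum fun i _ => pow_le_pow_left₀ (norm_nonneg _) (hx i) 2
      _ = d * R ^ 2 := by simp
  calc ‖x‖ = √(∑ i, ‖x i‖ ^ 2) := EuclideanSpace.norm_eq x
    _ ≤ √(d * R ^ 2) := Real.sqrt_le_sqrt hsum
    _ = √d * R := by rw [Real.sqrt_mul d.cast_nonneg, Real.sqrt_sq hR]

lemma isCompact_boxR (hR : 0 ≤ R) : IsCompact (boxR d R) :=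
  Metric.isCompact_of_isClosed_isBounded isClosed_boxR <|
    (Metric.isBounded_closedBall (x := 0) (r := √d * R)).subset fun x hx => by
      simpa using norm_le_of_mem_boxR hR hx

lemma LipschitzOnWith.abs_sub_apply_zero_le {η : EuclideanSpace ℝ (Fin d) → ℝ}
    (hη : LipschitzOnWith 1 η (boxR d R)) (hR : 0 ≤ R) {x : EuclideanSpace ℝ (Fin d)}
    (hx : x ∈ boxR d R) : |η x - η 0| ≤ √d * R := by
  have := hη.dist_le_mul x hx 0 (zero_mem_boxR hR)
  simp only [Real.dist_eq, NNReal.coe_one, one_mul, dist_zero_right] at this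
  exact this.trans (norm_le_of_mem_boxR hR hx)

end Box

lemma LipschitzOnWith.sub_const {α E : Type*} [PseudoEMetricSpace α] [SeminormedAddCommGroup E]
    {K : NNReal} {f : α → E} {s : Set α} (hf : LipschitzOnWith K f s) (c : E) :
    LipschitzOnWith K (fun x => f x - c) s :=
  fun x hx y hy => by simpa only [edist_sub_right] using hf hx hy

section Average

variable {α : Type*} [MeasurableSpace α] {μ : Measure α} {s : Set α} {f : α → ℝ}

lemma abs_setAverage_le (hs₀ : μ s ≠ 0) (hs : μ s ≠ ⊤) {C : ℝ} (hC : ∀ x ∈ s, |f x| ≤ C) :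
    |⨍ x in s, f x ∂μ| ≤ C := by
  have hpos : 0 < μ.real s := ENNReal.toReal_pos hs₀ hs
  have hint : |∫ x in s, f x ∂μ| ≤ C * μ.real s :=
    norm_setIntegral_le_of_norm_le_const hs.lt_top fun x hx =>
      (Real.norm_eq_abs _).trans_le (hC x hx)
  rw [setAverage_eq, smul_eq_mul, abs_mul, abs_inv, abs_of_pos hpos, inv_mul_le_iff₀ hpos]
  linarith

lemma setAverage_sub_const (hs₀ : μ s ≠ 0) (hs : μ s ≠ ⊤) (hf : IntegrableOn f s μ) (c : ℝ) :
    ⨍ x in s, (f x - c) ∂μ = ⨍ x in s, f x ∂μ - c := by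
  have hpos : 0 < μ.real s := ENNReal.toReal_pos hs₀ hs
  rw [setAverage_eq, setAverage_eq, integral_sub hf (integrableOn_const hs), setIntegral_const,
    smul_eq_mul, smul_eq_mul, smul_eq_mul]
  field_simp

lemma setIntegral_inv_smul_measure :
    ∫ x in s, f x ∂((μ s)⁻¹ • μ) = ⨍ x in s, f x ∂μ := by
  rw [Measure.restrict_smul, setAverage_eq']

end Average

lemma mul_sub_mul_le_min_mul_add_abs_sub {m n α β E : ℝ} (hm : 0 ≤ m) (hn : 0 ≤ n)
    (hα : |α| ≤ 1) (hβ : |β| ≤ 1) (h : α - β ≤ E) :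
    m * α - n * β ≤ min m n * E + |m - n| := by
  have hα' := abs_le.mp hα
  have hβ' := abs_le.mp hβ
  rcases le_total m n with hmn | hnm
  · rw [min_eq_left hmn, abs_of_nonpos (sub_nonpos.mpr hmn)]
    nlinarith
  · rw [min_eq_right hnm, abs_of_nonneg (sub_nonneg.mpr hnm)]
    nlinarith

lemma sub_le_two_mul_mul_div_max {m n α β L D : ℝ} (hm : 0 < m) (hn : 0 < n)
    (hα : |α| ≤ L) (hβ : |β| ≤ L) (h : m * α - n * β ≤ L * D) (hmn : |m - n| ≤ D) :
    α - β ≤ 2 * L * D / max m n := by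
  have hα' := abs_le.mp hα
  have hβ' := abs_le.mp hβ
  have hmn' := abs_le.mp hmn
  rcases le_total m n with hle | hle
  · rw [max_eq_right hle, le_div_iff₀ hn]
    nlinarith
  · rw [max_eq_left hle, le_div_iff₀ hm]
    nlinarith

section Distances

variable {d : ℕ} {R : ℝ} {μ ν : Measure (EuclideanSpace ℝ (Fin d))}
  {η : EuclideanSpace ℝ (Fin d) → ℝ}

lemma dBL_le_of_forall {c : ℝ}
    (h : ∀ η : EuclideanSpace ℝ (Fin d) → ℝ, LipschitzOnWith 1 η (boxR d R) →
      (∀ x ∈ boxR d R, |η x| ≤ 1) →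
      ∫ x in boxR d R, η x ∂μ - ∫ x in boxR d R, η x ∂ν ≤ c) :
    dBL d R μ ν ≤ c :=
  csSup_le ⟨0, 0, (LipschitzWith.const' 0).lipschitzOnWith, by simp, by simp⟩ <| by
    rintro _ ⟨η, hη, hη₁, rfl⟩
    exact h η hη hη₁

lemma dW_le_of_forall {c : ℝ}
    (h : ∀ η : EuclideanSpace ℝ (Fin d) → ℝ, LipschitzOnWith 1 η (boxR d R) →
      ⨍ x in boxR d R, η x ∂μ - ⨍ x in boxR d R, η x ∂ν ≤ c) :
    dW d R ((μ (boxR d R))⁻¹ • μ) ((ν (boxR d R))⁻¹ • ν) ≤ c :=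
  csSup_le ⟨0, 0, (LipschitzWith.const' 0).lipschitzOnWith, by simp⟩ <| by
    rintro _ ⟨η, hη, rfl⟩
    rw [setIntegral_inv_smul_measure, setIntegral_inv_smul_measure]
    exact h η hη

variable [IsFiniteMeasure μ] [IsFiniteMeasure ν]

lemma setIntegral_sub_le_dBL (hη : LipschitzOnWith 1 η (boxR d R))
    (hη₁ : ∀ x ∈ boxR d R, |η x| ≤ 1) :
    ∫ x in boxR d R, η x ∂μ - ∫ x in boxR d R, η x ∂ν ≤ dBL d R μ ν := by
  refine le_csSup ⟨μ.real (boxR d R) + ν.real (boxR d R), ?_⟩ ⟨η, hη, hη₁, rfl⟩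
  rintro _ ⟨ζ, -, hζ₁, rfl⟩
  have hbound (ρ : Measure (EuclideanSpace ℝ (Fin d))) [IsFiniteMeasure ρ] :
      |∫ x in boxR d R, ζ x ∂ρ| ≤ ρ.real (boxR d R) := by
    simpa using norm_setIntegral_le_of_norm_le_const (measure_lt_top ρ _)
      fun x hx => (Real.norm_eq_abs _).trans_le (hζ₁ x hx)
  linarith [le_abs_self (∫ x in boxR d R, ζ x ∂μ), neg_abs_le (∫ x in boxR d R, ζ x ∂ν),
    hbound μ, hbound ν]

lemma abs_measureReal_sub_le_dBL :
    |μ.real (boxR d R) - ν.real (boxR d R)| ≤ dBL d R μ ν := by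
  have hconst (c : ℝ) (hc : |c| ≤ 1) :
      c * (μ.real (boxR d R) - ν.real (boxR d R)) ≤ dBL d R μ ν := by
    have := setIntegral_sub_le_dBL (μ := μ) (ν := ν) (R := R)
      (LipschitzWith.const' c).lipschitzOnWith fun _ _ => hc
    rwa [setIntegral_const, setIntegral_const, smul_eq_mul, smul_eq_mul, ← sub_mul,
      mul_comm] at this
  exact abs_sub_le_iff.mpr ⟨by simpa using hconst 1 (by simp), by simpa using hconst (-1) (by simp)⟩

lemma setIntegral_sub_le_mul_dBL {L : ℝ} (hL : 1 ≤ L)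
    (hη : LipschitzOnWith 1 η (boxR d R)) (hηL : ∀ x ∈ boxR d R, |η x| ≤ L) :
    ∫ x in boxR d R, η x ∂μ - ∫ x in boxR d R, η x ∂ν ≤ L * dBL d R μ ν := by
  have hL₀ : 0 < L := zero_lt_one.trans_le hL
  have hscaled : LipschitzOnWith 1 (fun x => L⁻¹ * η x) (boxR d R) := by
    refine ((lipschitzWith_smul L⁻¹).comp_lipschitzOnWith hη).weaken ?_
    rw [mul_one, ← NNReal.coe_le_coe, coe_nnnorm, Real.norm_eq_abs, abs_inv, abs_of_pos hL₀]
    exact inv_le_one_of_one_le₀ hL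
  have := setIntegral_sub_le_dBL (μ := μ) (ν := ν) hscaled fun x hx => by
    rw [abs_mul, abs_inv, abs_of_pos hL₀, inv_mul_le_one₀ hL₀]
    exact hηL x hx
  rw [integral_const_mul, integral_const_mul, ← mul_sub, inv_mul_le_iff₀ hL₀] at this
  exact this

lemma setAverage_sub_setAverage_eq (hR : 0 ≤ R) (hμ : μ (boxR d R) ≠ 0) (hν : ν (boxR d R) ≠ 0)
    (hη : LipschitzOnWith 1 η (boxR d R)) :
    ⨍ x in boxR d R, η x ∂μ - ⨍ x in boxR d R, η x ∂ν
      = ⨍ x in boxR d R, (η x - η 0) ∂μ - ⨍ x in boxR d R, (η x - η 0) ∂ν := by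
  have hcont := hη.continuousOn
  rw [setAverage_sub_const hμ (measure_ne_top _ _) (hcont.integrableOn_compact (isCompact_boxR hR)),
    setAverage_sub_const hν (measure_ne_top _ _) (hcont.integrableOn_compact (isCompact_boxR hR)),
    sub_sub_sub_cancel_right]

lemma abs_setAverage_sub_apply_zero_le (hR : 0 ≤ R) (hμ : μ (boxR d R) ≠ 0)
    (hη : LipschitzOnWith 1 η (boxR d R)) :
    |⨍ x in boxR d R, (η x - η 0) ∂μ| ≤ √d * R :=
  abs_setAverage_le hμ (measure_ne_top _ _) fun _ hx => hη.abs_sub_apply_zero_le hR hx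

lemma setAverage_sub_le_dW (hR : 0 ≤ R) (hμ : μ (boxR d R) ≠ 0) (hν : ν (boxR d R) ≠ 0)
    (hη : LipschitzOnWith 1 η (boxR d R)) :
    ⨍ x in boxR d R, η x ∂μ - ⨍ x in boxR d R, η x ∂ν
      ≤ dW d R ((μ (boxR d R))⁻¹ • μ) ((ν (boxR d R))⁻¹ • ν) := by
  refine le_csSup ⟨2 * (√d * R), ?_⟩
    ⟨η, hη, by rw [setIntegral_inv_smul_measure, setIntegral_inv_smul_measure]⟩
  rintro _ ⟨ζ, hζ, rfl⟩
  rw [setIntegral_inv_smul_measure, setIntegral_inv_smul_measure,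
    setAverage_sub_setAverage_eq hR hμ hν hζ]
  linarith [abs_le.mp (abs_setAverage_sub_apply_zero_le hR hμ hζ),
    abs_le.mp (abs_setAverage_sub_apply_zero_le hR hν hζ)]

lemma dW_nonneg (hR : 0 ≤ R) (hμ : μ (boxR d R) ≠ 0) (hν : ν (boxR d R) ≠ 0) :
    0 ≤ dW d R ((μ (boxR d R))⁻¹ • μ) ((ν (boxR d R))⁻¹ • ν) := by
  simpa using setAverage_sub_le_dW hR hμ hν (LipschitzWith.const' (0 : ℝ)).lipschitzOnWith

theorem dBL_le_mul_dRdist (hR : 0 ≤ R) (hμ : μ (boxR d R) ≠ 0) (hν : ν (boxR d R) ≠ 0) :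
    dBL d R μ ν ≤ (min (μ.real (boxR d R)) (ν.real (boxR d R)) + 1) * dRdist d R μ ν := by
  refine dBL_le_of_forall fun η hη hη₁ => ?_
  rw [← measure_smul_setAverage _ (measure_ne_top μ _),
    ← measure_smul_setAverage _ (measure_ne_top ν _), smul_eq_mul, smul_eq_mul]
  have hbound := mul_sub_mul_le_min_mul_add_abs_sub (m := μ.real (boxR d R))
    (n := ν.real (boxR d R)) measureReal_nonneg measureReal_nonneg
    (abs_setAverage_le hμ (measure_ne_top _ _) hη₁) (abs_setAverage_le hν (measure_ne_top _ _) hη₁)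
    (setAverage_sub_le_dW hR hμ hν hη)
  have hE := dW_nonneg hR hμ hν
  have hmin : 0 ≤ min (μ.real (boxR d R)) (ν.real (boxR d R)) :=
    le_min measureReal_nonneg measureReal_nonneg
  rw [dRdist, ← measureReal_def, ← measureReal_def]
  nlinarith [mul_nonneg hmin (abs_nonneg (μ.real (boxR d R) - ν.real (boxR d R)))]

theorem dRdist_le_dBL_mul (hR : 0 ≤ R) (hμ : μ (boxR d R) ≠ 0) (hν : ν (boxR d R) ≠ 0) :
    dRdist d R μ ν ≤ dBL d R μ ν * (1 + 2 * max (√d * R) 1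
      / max (μ.real (boxR d R)) (ν.real (boxR d R))) := by
  have hmass := abs_measureReal_sub_le_dBL (R := R) (μ := μ) (ν := ν)
  have hW : dW d R ((μ (boxR d R))⁻¹ • μ) ((ν (boxR d R))⁻¹ • ν)
      ≤ 2 * max (√d * R) 1 * dBL d R μ ν / max (μ.real (boxR d R)) (ν.real (boxR d R)) := by
    refine dW_le_of_forall fun η hη => ?_
    rw [setAverage_sub_setAverage_eq hR hμ hν hη]
    refine sub_le_two_mul_mul_div_max (ENNReal.toReal_pos hμ (measure_ne_top _ _))
      (ENNReal.toReal_pos hν (measure_ne_top _ _))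
      ((abs_setAverage_sub_apply_zero_le hR hμ hη).trans (le_max_left _ _))
      ((abs_setAverage_sub_apply_zero_le hR hν hη).trans (le_max_left _ _)) ?_ hmass
    rw [← smul_eq_mul, ← smul_eq_mul, measure_smul_setAverage _ (measure_ne_top μ _),
      measure_smul_setAverage _ (measure_ne_top ν _)]
    exact setIntegral_sub_le_mul_dBL (le_max_right _ _) (hη.sub_const _)
      fun x hx => (hη.abs_sub_apply_zero_le hR hx).trans (le_max_left _ _)
  calc dRdist d R μ ν ≤ dBL d R μ ν
        + 2 * max (√d * R) 1 * dBL d R μ ν / max (μ.real (boxR d R)) (ν.real (boxR d R)) :=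
        add_le_add hmass hW
    _ = _ := by ring

end Distances

/-- Comparison between `d_R` and the bounded Lipschitz distance `d_{BL,R}`:
`(μ(B_R) ∧ ν(B_R) + 1)⁻¹ d_{BL,R}(μ,ν) ≤ d_R(μ,ν)
  ≤ d_{BL,R}(μ,ν)(1 + 2((√d R) ∨ 1)/(μ(B_R) ∨ ν(B_R)))`. -/
theorem dR_dBL_comparison (d : ℕ) (R : ℝ) (hR : 0 < R)
    (μ ν : Measure (EuclideanSpace ℝ (Fin d)))
    [IsFiniteMeasure μ] [IsFiniteMeasure ν]
    (hμ : μ (boxR d R) ≠ 0) (hν : ν (boxR d R) ≠ 0) :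
    (min (μ (boxR d R)).toReal (ν (boxR d R)).toReal + 1)⁻¹ * dBL d R μ ν
        ≤ dRdist d R μ ν
    ∧ dRdist d R μ ν
        ≤ dBL d R μ ν * (1 + 2 * max (Real.sqrt d * R) 1
            / max (μ (boxR d R)).toReal (ν (boxR d R)).toReal) := by
  have hmin : 0 < min (μ (boxR d R)).toReal (ν (boxR d R)).toReal + 1 := by positivity
  exact ⟨(inv_mul_le_iff₀ hmin).mpr (dBL_le_mul_dRdist hR.le hμ hν),
    dRdist_le_dBL_mul hR.le hμ hν⟩
end
end
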